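/- The minimax regret, i.e., the minimum over all k-partitions-with-sinks {P̂,Ŷ} of R_max({P̂,Ŷ}), equals the minimum, over all partitions of {0,...,n} into k consecutive nonempty blocks {l_p,...,r_p} (1 ≤ p ≤ k), of max over 1 ≤ p ≤ k of R_{l_p r_p}; that is, it equals M(k, n). -/
import Mathlib


/-- Maximum of `f` over a finite set of indices, with the empty maximum being `0`. -/
noncomputable def maxOver (S : Finset ℕ) (f : ℕ → ℝ) : ℝ := S.fold max 0 f

/-- Left evacuation time to sink `x t` of the subpath starting at `x l`, under weights `w`. -/
noncomputable def thetaL (x : ℕ → ℝ) (τ : ℝ) (w : ℕ → ℝ) (l t : ℕ) : ℝ :=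
  maxOver (Finset.Ico l t) (fun i => (x t - x i) * τ + ∑ j ∈ Finset.Icc l i, w j)

/-- Right evacuation time to sink `x t` of the subpath ending at `x r`, under weights `w`. -/
noncomputable def thetaR (x : ℕ → ℝ) (τ : ℝ) (w : ℕ → ℝ) (t r : ℕ) : ℝ :=
  maxOver (Finset.Ioc t r) (fun i => (x i - x t) * τ + ∑ j ∈ Finset.Icc i r, w j)

/-- 1-sink evacuation time `Θ¹([x_l,x_r], x_t, w)`. -/
noncomputable def theta1 (x : ℕ → ℝ) (τ : ℝ) (w : ℕ → ℝ) (l t r : ℕ) : ℝ :=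
  max (thetaL x τ w l t) (thetaR x τ w t r)

/-- A scenario assigns each vertex a weight within its bounds. -/
def IsScenario (n : ℕ) (wlo whi : ℕ → ℝ) (s : ℕ → ℝ) : Prop :=
  ∀ i, i ≤ n → wlo i ≤ s i ∧ s i ≤ whi i

/-- A `k`-partition-with-sinks of the vertex set `{0,…,n}` into `k` consecutive
nonempty blocks `{l p, …, r p}` (`p ∈ {1,…,k}`) with a sink `t p` in each block. -/
structure KPartSinks (n k : ℕ) where
  l : ℕ → ℕ
  r : ℕ → ℕ
  t : ℕ → ℕ
  first : l 1 = 0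
  last : r k = n
  consec : ∀ p, 1 ≤ p → p < k → l (p + 1) = r p + 1
  block_nonempty : ∀ p, 1 ≤ p → p ≤ k → l p ≤ r p
  sink_lb : ∀ p, 1 ≤ p → p ≤ k → l p ≤ t p
  sink_ub : ∀ p, 1 ≤ p → p ≤ k → t p ≤ r p

/-- `k`-sink evacuation time `Θᵏ(P, {P̂,Ŷ}, w)`. -/
noncomputable def thetaK {n k : ℕ} (x : ℕ → ℝ) (τ : ℝ) (PY : KPartSinks n k) (w : ℕ → ℝ) : ℝ :=
  maxOver (Finset.Icc 1 k) (fun p => theta1 x τ w (PY.l p) (PY.t p) (PY.r p))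

/-- Optimal `k`-sink evacuation time `Θᵏ_opt(P, w)`. -/
noncomputable def thetaOpt (x : ℕ → ℝ) (τ : ℝ) (n k : ℕ) (w : ℕ → ℝ) : ℝ :=
  sInf {v : ℝ | ∃ PY : KPartSinks n k, thetaK x τ PY w = v}

/-- Regret `R({P̂,Ŷ}, w)`. -/
noncomputable def regret {n k : ℕ} (x : ℕ → ℝ) (τ : ℝ) (PY : KPartSinks n k) (w : ℕ → ℝ) : ℝ :=
  thetaK x τ PY w - thetaOpt x τ n k w

/-- Max-regret `R_max({P̂,Ŷ})`. -/
noncomputable def maxRegret {n k : ℕ} (x : ℕ → ℝ) (τ : ℝ) (wlo whi : ℕ → ℝ)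
    (PY : KPartSinks n k) : ℝ :=
  sSup {v : ℝ | ∃ s : ℕ → ℝ, IsScenario n wlo whi s ∧ regret x τ PY s = v}

/-- A worst-case scenario: a scenario attaining the max-regret. -/
def IsWorstCase {n k : ℕ} (x : ℕ → ℝ) (τ : ℝ) (wlo whi : ℕ → ℝ) (PY : KPartSinks n k)
    (s : ℕ → ℝ) : Prop :=
  IsScenario n wlo whi s ∧ regret x τ PY s = maxRegret x τ wlo whi PY

/-- `d` is the index of the dominant part of `{P̂,Ŷ}` under weights `w`:
the smallest index attaining `max_p Θ¹(P_p, y_p, w)`. -/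
def IsDominant {n k : ℕ} (x : ℕ → ℝ) (τ : ℝ) (PY : KPartSinks n k) (w : ℕ → ℝ) (d : ℕ) : Prop :=
  1 ≤ d ∧ d ≤ k ∧
  (∀ p, 1 ≤ p → p ≤ k →
    theta1 x τ w (PY.l p) (PY.t p) (PY.r p) ≤ theta1 x τ w (PY.l d) (PY.t d) (PY.r d)) ∧
  (∀ p, 1 ≤ p → p < d →
    theta1 x τ w (PY.l p) (PY.t p) (PY.r p) < theta1 x τ w (PY.l d) (PY.t d) (PY.r d))

/-- `R_{lr}(x_t)`: the max-regret of the subpath `[x_l,x_r]` as assumed dominant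
part with sink `x_t`. -/
noncomputable def Rsink (x : ℕ → ℝ) (τ : ℝ) (wlo whi : ℕ → ℝ) (n k : ℕ) (l r t : ℕ) : ℝ :=
  sSup {v : ℝ | ∃ s : ℕ → ℝ, IsScenario n wlo whi s ∧
    theta1 x τ s l t r - thetaOpt x τ n k s = v}

/-- `R_{lr}`: the minimax regret of the subpath `[x_l,x_r]` as assumed dominant part. -/
noncomputable def Rlr (x : ℕ → ℝ) (τ : ℝ) (wlo whi : ℕ → ℝ) (n k : ℕ) (l r : ℕ) : ℝ :=
  sInf {v : ℝ | ∃ t, l ≤ t ∧ t ≤ r ∧ Rsink x τ wlo whi n k l r t = v}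

/-- A partition of `{0,…,i}` into `q` consecutive nonempty blocks `{l p, …, r p}`. -/
def IsQPartition (q i : ℕ) (l r : ℕ → ℕ) : Prop :=
  l 1 = 0 ∧ r q = i ∧ (∀ p, 1 ≤ p → p < q → l (p + 1) = r p + 1) ∧
  (∀ p, 1 ≤ p → p ≤ q → l p ≤ r p)

/-- `M(q, i)`: the minimum over partitions of `{0,…,i}` into `q` consecutive
nonempty blocks of `max_p R_{l_p r_p}`. -/
noncomputable def Mreg (x : ℕ → ℝ) (τ : ℝ) (wlo whi : ℕ → ℝ) (n k : ℕ) (q i : ℕ) : ℝ :=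
  sInf {v : ℝ | ∃ lf rf : ℕ → ℕ, IsQPartition q i lf rf ∧
    maxOver (Finset.Icc 1 q) (fun p => Rlr x τ wlo whi n k (lf p) (rf p)) = v}

/-- Left-dominant scenario on `{l,…,r}`. -/
def LeftDominant (wlo whi s : ℕ → ℝ) (l r : ℕ) : Prop :=
  ∃ i, l ≤ i ∧ i ≤ r + 1 ∧ (∀ j, l ≤ j → j < i → s j = whi j) ∧
    (∀ j, i ≤ j → j ≤ r → s j = wlo j)

/-- Right-dominant scenario on `{l,…,r}`. -/
def RightDominant (wlo whi s : ℕ → ℝ) (l r : ℕ) : Prop :=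
  ∃ i, l ≤ i ∧ i ≤ r + 1 ∧ (∀ j, l ≤ j → j < i → s j = wlo j) ∧
    (∀ j, i ≤ j → j ≤ r → s j = whi j)

/-! ### Auxiliary lemmas -/

lemma maxOver_nonneg (S : Finset ℕ) (f : ℕ → ℝ) : 0 ≤ maxOver S f := by
  unfold maxOver; rw [Finset.le_fold_max]; exact Or.inl le_rfl

lemma maxOver_le {S : Finset ℕ} {f : ℕ → ℝ} {c : ℝ} (hc : (0:ℝ) ≤ c)
    (h : ∀ i ∈ S, f i ≤ c) : maxOver S f ≤ c := by
  unfold maxOver; rw [Finset.fold_max_le]; exact ⟨hc, h⟩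

lemma le_maxOver {S : Finset ℕ} {f : ℕ → ℝ} {i : ℕ} (hi : i ∈ S) : f i ≤ maxOver S f := by
  unfold maxOver; rw [Finset.le_fold_max]; exact Or.inr ⟨i, hi, le_rfl⟩

lemma theta1_nonneg (x : ℕ → ℝ) (τ : ℝ) (w : ℕ → ℝ) (l t r : ℕ) :
    0 ≤ theta1 x τ w l t r :=
  le_max_of_le_left (maxOver_nonneg _ _)

lemma thetaK_nonneg {n k : ℕ} (x : ℕ → ℝ) (τ : ℝ) (PY : KPartSinks n k) (w : ℕ → ℝ) :
    0 ≤ thetaK x τ PY w := maxOver_nonneg _ _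

/-- A uniform bound on evacuation times under any scenario. -/
noncomputable def Bnd (x : ℕ → ℝ) (τ : ℝ) (whi : ℕ → ℝ) (n : ℕ) : ℝ :=
  maxOver (Finset.Icc 0 n) (fun i => |x i|) * 2 * τ + ∑ j ∈ Finset.Icc 0 n, |whi j|

lemma Bnd_nonneg (x : ℕ → ℝ) {τ : ℝ} (whi : ℕ → ℝ) (n : ℕ) (hτ : 0 ≤ τ) :
    0 ≤ Bnd x τ whi n := by
  have h1 := maxOver_nonneg (Finset.Icc 0 n) (fun i => |x i|)
  have h2 : (0:ℝ) ≤ ∑ j ∈ Finset.Icc 0 n, |whi j| :=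
    Finset.sum_nonneg fun j _ => abs_nonneg _
  have : 0 ≤ maxOver (Finset.Icc 0 n) (fun i => |x i|) * 2 * τ := by positivity
  unfold Bnd; linarith

lemma theta1_le_Bnd {n : ℕ} {x : ℕ → ℝ} {τ : ℝ} {wlo whi s : ℕ → ℝ}
    (hs : IsScenario n wlo whi s) (hτ : 0 ≤ τ) {l t r : ℕ}
    (hlt : l ≤ t) (htr : t ≤ r) (hrn : r ≤ n) :
    theta1 x τ s l t r ≤ Bnd x τ whi n := by
  set A := maxOver (Finset.Icc 0 n) (fun i => |x i|) with hA
  have hAx : ∀ i, i ≤ n → |x i| ≤ A := fun i hi =>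
    le_maxOver (f := fun i => |x i|) (Finset.mem_Icc.2 ⟨Nat.zero_le _, hi⟩)
  set W := ∑ j ∈ Finset.Icc 0 n, |whi j| with hW
  have hsum : ∀ a b : ℕ, b ≤ n → ∑ j ∈ Finset.Icc a b, s j ≤ W := by
    intro a b hb
    calc ∑ j ∈ Finset.Icc a b, s j ≤ ∑ j ∈ Finset.Icc a b, |whi j| := by
          refine Finset.sum_le_sum fun j hj => ?_
          have hj' : j ≤ n := by
            simp only [Finset.mem_Icc] at hj; omega
          exact le_trans (hs j hj').2 (le_abs_self _)
      _ ≤ W := by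
          refine Finset.sum_le_sum_of_subset_of_nonneg ?_ fun j _ _ => abs_nonneg _
          intro j hj; simp only [Finset.mem_Icc] at hj ⊢; omega
  have hB0 : 0 ≤ Bnd x τ whi n := Bnd_nonneg x whi n hτ
  have hBdef : Bnd x τ whi n = A * 2 * τ + W := rfl
  refine max_le ?_ ?_
  · refine maxOver_le hB0 fun i hi => ?_
    simp only [Finset.mem_Ico] at hi
    have h1 : x t - x i ≤ A * 2 := by
      have := hAx t (le_trans htr hrn)
      have := hAx i (by omega)
      have := le_abs_self (x t)
      have := neg_abs_le (x i)
      linarith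
    have h2 : (x t - x i) * τ ≤ A * 2 * τ := mul_le_mul_of_nonneg_right h1 hτ
    have h3 := hsum l i (by omega)
    rw [hBdef]; linarith
  · refine maxOver_le hB0 fun i hi => ?_
    simp only [Finset.mem_Ioc] at hi
    have h1 : x i - x t ≤ A * 2 := by
      have := hAx t (le_trans htr hrn)
      have := hAx i (by omega)
      have := le_abs_self (x i)
      have := neg_abs_le (x t)
      linarith
    have h2 : (x i - x t) * τ ≤ A * 2 * τ := mul_le_mul_of_nonneg_right h1 hτ
    have h3 := hsum i r hrn
    rw [hBdef]; linarith

lemma KPartSinks.r_le_aux {n k : ℕ} (PY : KPartSinks n k) :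
    ∀ d p, 1 ≤ p → p + d = k → PY.r p ≤ n := by
  intro d
  induction d with
  | zero =>
      intro p hp hpk
      have : p = k := by omega
      subst this
      exact PY.last.le
  | succ d ih =>
      intro p hp hpk
      have hpk' : p < k := by omega
      have h1 := PY.consec p hp hpk'
      have h2 := PY.block_nonempty (p + 1) (by omega) (by omega)
      have h3 := ih (p + 1) (by omega) (by omega)
      omega

lemma KPartSinks.r_le_n {n k : ℕ} (PY : KPartSinks n k) {p : ℕ}
    (h1 : 1 ≤ p) (h2 : p ≤ k) : PY.r p ≤ n :=
  PY.r_le_aux (k - p) p h1 (by omega)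

/-- The canonical `k`-partition-with-sinks when `k ≤ n + 1`. -/
def canonPY (n k : ℕ) (hk : 1 ≤ k) (hkn : k ≤ n + 1) : KPartSinks n k where
  l := fun p => p - 1
  r := fun p => if p = k then n else p - 1
  t := fun p => p - 1
  first := rfl
  last := if_pos rfl
  consec := fun p h1 h2 => by
    show p + 1 - 1 = (if p = k then n else p - 1) + 1
    rw [if_neg (by omega)]; omega
  block_nonempty := fun p h1 _ => by
    show p - 1 ≤ if p = k then n else p - 1
    split <;> omega
  sink_lb := fun _ _ _ => le_rfl
  sink_ub := fun p h1 _ => by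
    show p - 1 ≤ if p = k then n else p - 1
    split <;> omega

lemma part_le_of_partition {l r : ℕ → ℕ} {q i : ℕ} (h1 : l 1 = 0) (h2 : r q = i)
    (hc : ∀ p, 1 ≤ p → p < q → l (p + 1) = r p + 1)
    (hb : ∀ p, 1 ≤ p → p ≤ q → l p ≤ r p) (hq : 1 ≤ q) : q ≤ i + 1 := by
  have key : ∀ p, 1 ≤ p → p ≤ q → p - 1 ≤ l p := by
    intro p
    induction p with
    | zero => omega
    | succ m ih =>
        intro _ hmq
        by_cases hm : m = 0
        · subst hm; omega
        · have h1m : 1 ≤ m := by omega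
          have := ih h1m (by omega)
          have := hc m h1m (by omega)
          have := hb m h1m (by omega)
          omega
  have hkq := key q hq le_rfl
  have := hb q hq le_rfl
  omega

section MainLemmas

variable {n k : ℕ} {x : ℕ → ℝ} {τ : ℝ} {wlo whi : ℕ → ℝ}

lemma scenario_wlo (hw : ∀ i, i ≤ n → 0 < wlo i ∧ wlo i ≤ whi i) :
    IsScenario n wlo whi wlo := fun i hi => ⟨le_rfl, (hw i hi).2⟩

lemma thetaOpt_bddBelow (s : ℕ → ℝ) :
    0 ∈ lowerBounds {v : ℝ | ∃ PY : KPartSinks n k, thetaK x τ PY s = v} := by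
  rintro v ⟨PY, rfl⟩; exact thetaK_nonneg x τ PY s

lemma thetaOpt_le_thetaK (PY : KPartSinks n k) (s : ℕ → ℝ) :
    thetaOpt x τ n k s ≤ thetaK x τ PY s :=
  csInf_le ⟨0, thetaOpt_bddBelow s⟩ ⟨PY, rfl⟩

lemma thetaOpt_nonneg (hk : 1 ≤ k) (hkn : k ≤ n + 1) (s : ℕ → ℝ) :
    0 ≤ thetaOpt x τ n k s :=
  le_csInf ⟨_, canonPY n k hk hkn, rfl⟩ (thetaOpt_bddBelow s)

lemma thetaK_le_Bnd (hτ : 0 ≤ τ) {s : ℕ → ℝ} (hs : IsScenario n wlo whi s)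
    (PY : KPartSinks n k) : thetaK x τ PY s ≤ Bnd x τ whi n := by
  refine maxOver_le (Bnd_nonneg x whi n hτ) fun p hp => ?_
  simp only [Finset.mem_Icc] at hp
  exact theta1_le_Bnd hs hτ (PY.sink_lb p hp.1 hp.2) (PY.sink_ub p hp.1 hp.2)
    (PY.r_le_n hp.1 hp.2)

lemma regret_nonneg (PY : KPartSinks n k) (s : ℕ → ℝ) :
    0 ≤ regret x τ PY s :=
  sub_nonneg.2 (thetaOpt_le_thetaK PY s)

lemma regret_le_Bnd (hτ : 0 ≤ τ) (hk : 1 ≤ k) (hkn : k ≤ n + 1)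
    {s : ℕ → ℝ} (hs : IsScenario n wlo whi s) (PY : KPartSinks n k) :
    regret x τ PY s ≤ Bnd x τ whi n := by
  have h1 := thetaK_le_Bnd (x := x) (wlo := wlo) hτ hs PY
  have h2 := thetaOpt_nonneg (x := x) (τ := τ) hk hkn s
  unfold regret; linarith

lemma regretSet_bddAbove (hτ : 0 ≤ τ) (hk : 1 ≤ k) (hkn : k ≤ n + 1)
    (PY : KPartSinks n k) :
    BddAbove {v : ℝ | ∃ s, IsScenario n wlo whi s ∧ regret x τ PY s = v} := by
  refine ⟨Bnd x τ whi n, ?_⟩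
  rintro v ⟨s, hs, rfl⟩
  exact regret_le_Bnd hτ hk hkn hs PY

lemma maxRegret_nonneg (hτ : 0 ≤ τ) (hk : 1 ≤ k) (hkn : k ≤ n + 1)
    (hw : ∀ i, i ≤ n → 0 < wlo i ∧ wlo i ≤ whi i) (PY : KPartSinks n k) :
    0 ≤ maxRegret x τ wlo whi PY :=
  le_trans (regret_nonneg PY wlo)
    (le_csSup (regretSet_bddAbove hτ hk hkn PY) ⟨wlo, scenario_wlo hw, rfl⟩)

lemma RsinkSet_bddAbove (hτ : 0 ≤ τ) (hk : 1 ≤ k) (hkn : k ≤ n + 1)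
    {l t r : ℕ} (hlt : l ≤ t) (htr : t ≤ r) (hrn : r ≤ n) :
    BddAbove {v : ℝ | ∃ s : ℕ → ℝ, IsScenario n wlo whi s ∧
      theta1 x τ s l t r - thetaOpt x τ n k s = v} := by
  refine ⟨Bnd x τ whi n, ?_⟩
  rintro v ⟨s, hs, rfl⟩
  have h1 := theta1_le_Bnd (x := x) hs hτ hlt htr hrn
  have h2 := thetaOpt_nonneg (x := x) (τ := τ) hk hkn s
  linarith

lemma Rsink_le_maxRegret (hτ : 0 ≤ τ) (hk : 1 ≤ k) (hkn : k ≤ n + 1)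
    (hw : ∀ i, i ≤ n → 0 < wlo i ∧ wlo i ≤ whi i) (PY : KPartSinks n k)
    {p : ℕ} (hp1 : 1 ≤ p) (hp2 : p ≤ k) :
    Rsink x τ wlo whi n k (PY.l p) (PY.r p) (PY.t p) ≤ maxRegret x τ wlo whi PY := by
  refine csSup_le ⟨_, wlo, scenario_wlo hw, rfl⟩ ?_
  rintro v ⟨s, hs, rfl⟩
  have h1 : theta1 x τ s (PY.l p) (PY.t p) (PY.r p) ≤ thetaK x τ PY s := by
    unfold thetaK
    exact le_maxOver (f := fun p => theta1 x τ s (PY.l p) (PY.t p) (PY.r p))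
      (Finset.mem_Icc.2 ⟨hp1, hp2⟩)
  have h2 : regret x τ PY s ≤ maxRegret x τ wlo whi PY :=
    le_csSup (regretSet_bddAbove hτ hk hkn PY) ⟨s, hs, rfl⟩
  have h3 : regret x τ PY s = thetaK x τ PY s - thetaOpt x τ n k s := rfl
  linarith

lemma maxRegret_le_maxOverRsink (hτ : 0 ≤ τ) (hk : 1 ≤ k) (hkn : k ≤ n + 1)
    (hw : ∀ i, i ≤ n → 0 < wlo i ∧ wlo i ≤ whi i) (PY : KPartSinks n k) :
    maxRegret x τ wlo whi PY ≤
      maxOver (Finset.Icc 1 k)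
        (fun p => Rsink x τ wlo whi n k (PY.l p) (PY.r p) (PY.t p)) := by
  refine csSup_le ⟨_, wlo, scenario_wlo hw, rfl⟩ ?_
  rintro v ⟨s, hs, rfl⟩
  set M := maxOver (Finset.Icc 1 k)
    (fun p => Rsink x τ wlo whi n k (PY.l p) (PY.r p) (PY.t p)) with hM
  have hM0 : 0 ≤ M := maxOver_nonneg _ _
  have hopt0 := thetaOpt_nonneg (x := x) (τ := τ) hk hkn s
  have hK : thetaK x τ PY s ≤ thetaOpt x τ n k s + M := by
    refine maxOver_le (by linarith) fun p hp => ?_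
    simp only [Finset.mem_Icc] at hp
    have h1 : theta1 x τ s (PY.l p) (PY.t p) (PY.r p) - thetaOpt x τ n k s ≤
        Rsink x τ wlo whi n k (PY.l p) (PY.r p) (PY.t p) :=
      le_csSup (RsinkSet_bddAbove hτ hk hkn (PY.sink_lb p hp.1 hp.2)
        (PY.sink_ub p hp.1 hp.2) (PY.r_le_n hp.1 hp.2)) ⟨s, hs, rfl⟩
    have h2 : Rsink x τ wlo whi n k (PY.l p) (PY.r p) (PY.t p) ≤ M :=
      hM ▸ le_maxOver (f := fun p => Rsink x τ wlo whi n k (PY.l p) (PY.r p) (PY.t p))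
        (Finset.mem_Icc.2 ⟨hp.1, hp.2⟩)
    linarith
  have h3 : regret x τ PY s = thetaK x τ PY s - thetaOpt x τ n k s := rfl
  linarith

lemma RlrSet_finite (l r : ℕ) :
    {v : ℝ | ∃ t, l ≤ t ∧ t ≤ r ∧ Rsink x τ wlo whi n k l r t = v}.Finite := by
  refine Set.Finite.subset
    (Set.Finite.image (fun t => Rsink x τ wlo whi n k l r t) (Set.finite_Icc l r)) ?_
  rintro v ⟨t, h1, h2, rfl⟩
  exact ⟨t, ⟨h1, h2⟩, rfl⟩

lemma Rlr_mem {l r : ℕ} (hlr : l ≤ r) :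
    ∃ t, l ≤ t ∧ t ≤ r ∧ Rsink x τ wlo whi n k l r t = Rlr x τ wlo whi n k l r := by
  have h : Rlr x τ wlo whi n k l r ∈
      {v : ℝ | ∃ t, l ≤ t ∧ t ≤ r ∧ Rsink x τ wlo whi n k l r t = v} := by
    refine Set.Nonempty.csInf_mem ?_ (RlrSet_finite l r)
    exact ⟨Rsink x τ wlo whi n k l r l, l, le_rfl, hlr, rfl⟩
  exact h

lemma Rlr_le_Rsink {l r t : ℕ} (h1 : l ≤ t) (h2 : t ≤ r) :
    Rlr x τ wlo whi n k l r ≤ Rsink x τ wlo whi n k l r t :=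
  csInf_le (Set.Finite.bddBelow (RlrSet_finite l r)) ⟨t, h1, h2, rfl⟩

end MainLemmas

/-- the minimax regret over all `k`-partitions-with-sinks equals
`M(k, n)`, the minimum over `k`-partitions of the maximum of the per-part
minimax regrets `R_{l_p r_p}`. -/
theorem stmt_4 (n k : ℕ) (x : ℕ → ℝ) (τ : ℝ) (wlo whi : ℕ → ℝ)
    (hx : ∀ i, i < n → x i < x (i + 1)) (hτ : 0 < τ)
    (hw : ∀ i, i ≤ n → 0 < wlo i ∧ wlo i ≤ whi i) (hk : 1 ≤ k) :
    sInf {v : ℝ | ∃ PY : KPartSinks n k, maxRegret x τ wlo whi PY = v} =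
      Mreg x τ wlo whi n k k n := by
  have hτ0 : 0 ≤ τ := hτ.le
  by_cases hkn : k ≤ n + 1
  · -- main case
    have hbL : BddBelow {v : ℝ | ∃ PY : KPartSinks n k, maxRegret x τ wlo whi PY = v} := by
      refine ⟨0, ?_⟩
      rintro v ⟨PY, rfl⟩
      exact maxRegret_nonneg hτ0 hk hkn hw PY
    have hbR : BddBelow {v : ℝ | ∃ lf rf : ℕ → ℕ, IsQPartition k n lf rf ∧
        maxOver (Finset.Icc 1 k) (fun p => Rlr x τ wlo whi n k (lf p) (rf p)) = v} := by
      refine ⟨0, ?_⟩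
      rintro v ⟨lf, rf, _, rfl⟩
      exact maxOver_nonneg _ _
    set PY0 := canonPY n k hk hkn with hPY0
    refine le_antisymm ?_ ?_
    · -- LHS ≤ Mreg
      rw [Mreg]
      refine le_csInf ⟨_, PY0.l, PY0.r,
        ⟨PY0.first, PY0.last, PY0.consec, PY0.block_nonempty⟩, rfl⟩ ?_
      rintro b ⟨lf, rf, ⟨hq1, hq2, hq3, hq4⟩, rfl⟩
      have hsel : ∀ p, 1 ≤ p ∧ p ≤ k → ∃ t, lf p ≤ t ∧ t ≤ rf p ∧
          Rsink x τ wlo whi n k (lf p) (rf p) t = Rlr x τ wlo whi n k (lf p) (rf p) :=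
        fun p hp => Rlr_mem (hq4 p hp.1 hp.2)
      set tf : ℕ → ℕ := fun p => if h : 1 ≤ p ∧ p ≤ k then (hsel p h).choose else lf p
        with htf
      have htf_spec : ∀ p, 1 ≤ p → p ≤ k → lf p ≤ tf p ∧ tf p ≤ rf p ∧
          Rsink x τ wlo whi n k (lf p) (rf p) (tf p) =
            Rlr x τ wlo whi n k (lf p) (rf p) := by
        intro p h1 h2
        have h : 1 ≤ p ∧ p ≤ k := ⟨h1, h2⟩
        simp only [htf, dif_pos h]
        exact (hsel p h).choose_spec
      set PY : KPartSinks n k :=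
        ⟨lf, rf, tf, hq1, hq2, hq3, hq4,
          fun p h1 h2 => (htf_spec p h1 h2).1,
          fun p h1 h2 => (htf_spec p h1 h2).2.1⟩ with hPY
      have step1 : sInf {v : ℝ | ∃ PY : KPartSinks n k, maxRegret x τ wlo whi PY = v} ≤
          maxRegret x τ wlo whi PY := csInf_le hbL ⟨PY, rfl⟩
      have step2 := maxRegret_le_maxOverRsink (x := x) hτ0 hk hkn hw PY
      have step3 : maxOver (Finset.Icc 1 k)
            (fun p => Rsink x τ wlo whi n k (PY.l p) (PY.r p) (PY.t p)) =
          maxOver (Finset.Icc 1 k) (fun p => Rlr x τ wlo whi n k (lf p) (rf p)) := by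
        refine Finset.fold_congr fun p hp => ?_
        simp only [Finset.mem_Icc] at hp
        exact (htf_spec p hp.1 hp.2).2.2
      linarith
    · -- Mreg ≤ LHS
      refine le_csInf ⟨_, PY0, rfl⟩ ?_
      rintro b ⟨PY, rfl⟩
      have step1 : Mreg x τ wlo whi n k k n ≤
          maxOver (Finset.Icc 1 k) (fun p => Rlr x τ wlo whi n k (PY.l p) (PY.r p)) := by
        rw [Mreg]
        exact csInf_le hbR ⟨PY.l, PY.r,
          ⟨PY.first, PY.last, PY.consec, PY.block_nonempty⟩, rfl⟩
      have step2 : maxOver (Finset.Icc 1 k)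
            (fun p => Rlr x τ wlo whi n k (PY.l p) (PY.r p)) ≤
          maxRegret x τ wlo whi PY := by
        refine maxOver_le (maxRegret_nonneg hτ0 hk hkn hw PY) fun p hp => ?_
        simp only [Finset.mem_Icc] at hp
        exact le_trans
          (Rlr_le_Rsink (PY.sink_lb p hp.1 hp.2) (PY.sink_ub p hp.1 hp.2))
          (Rsink_le_maxRegret hτ0 hk hkn hw PY hp.1 hp.2)
      linarith
  · -- degenerate case: no partition exists, both sides are `sInf ∅ = 0`
    have hL : {v : ℝ | ∃ PY : KPartSinks n k, maxRegret x τ wlo whi PY = v} = ∅ := by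
      ext v
      simp only [Set.mem_setOf_eq, Set.mem_empty_iff_false, iff_false, not_exists]
      intro PY _
      exact hkn (part_le_of_partition PY.first PY.last PY.consec PY.block_nonempty hk)
    have hR : {v : ℝ | ∃ lf rf : ℕ → ℕ, IsQPartition k n lf rf ∧
        maxOver (Finset.Icc 1 k) (fun p => Rlr x τ wlo whi n k (lf p) (rf p)) = v} = ∅ := by
      ext v
      simp only [Set.mem_setOf_eq, Set.mem_empty_iff_false, iff_false, not_exists]
      intro lf rf ⟨⟨hq1, hq2, hq3, hq4⟩, _⟩
      exact hkn (part_le_of_partition hq1 hq2 hq3 hq4 hk)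
    rw [Mreg, hL, hR]
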